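/- arXiv:math/0202181 — 4 statements merged into one kernel-verified Lean document; each statement's English description precedes it below -/
import Mathlib

section
/- Let λ, μ ∈ ℂ. The Witt-algebra module F_{λ,μ} admits a nondegenerate symmetric invariant bilinear form if and only if λ = 1/2 and 2μ ∈ ℤ. Moreover, when λ = 1/2 and 2μ ∈ ℤ, the bilinear form determined by B(φ_i, φ_j) = 1 if i + j = −2μ − 1 and B(φ_i, φ_j) = 0 otherwise is symmetric, nondegenerate and invariant. -/
open scoped Classical

noncomputable section

/-- The underlying space of F_{λ,μ}: finitely supported ℤ-indexed families
(coordinates with respect to the basis (φ_i)_{i ∈ ℤ}). -/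
abbrev FF := ℤ →₀ ℂ

/-- The basis vector φ_i = t^{μ+i}(dt)^λ. -/
def phi (i : ℤ) : FF := Finsupp.single i 1

/-- The action of the Witt-algebra basis element e_n = t^{n+1} d/dt on F_{λ,μ}:
e_n·φ_i = (μ + i + λ(n+1)) φ_{i+n}. -/
def wittE (lam mu : ℂ) (n : ℤ) : Module.End ℂ FF :=
  Finsupp.lsum ℂ (fun i : ℤ =>
    (mu + (i : ℂ) + lam * ((n : ℂ) + 1)) • Finsupp.lsingle (i + n))

/-- Invariance of a bilinear form: B(e_n·u, v) + B(u, e_n·v) = 0 for all n. -/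
def IsWittInvariant (lam mu : ℂ) (B : FF →ₗ[ℂ] FF →ₗ[ℂ] ℂ) : Prop :=
  ∀ (n : ℤ) (u v : FF), B (wittE lam mu n u) v + B u (wittE lam mu n v) = 0

/-- The bilinear form determined by B(φ_i, φ_j) = 1 if i + j = −2μ − 1 and 0 otherwise. -/
def Bsym (mu : ℂ) : FF →ₗ[ℂ] FF →ₗ[ℂ] ℂ :=
  Finsupp.lsum ℂ (fun i : ℤ =>
    LinearMap.toSpanSingleton ℂ (FF →ₗ[ℂ] ℂ)
      (Finsupp.lsum ℂ (fun j : ℤ =>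
        (if ((i + j : ℤ) : ℂ) = -2*mu - 1 then (1 : ℂ) else 0) •
          (LinearMap.id : ℂ →ₗ[ℂ] ℂ))))

/-!
Taking `n = 0` in the invariance identity gives `(2μ + 2λ + i + j) B(φ_i, φ_j) = 0`, so a
nondegenerate invariant form pairs each `φ_i` with `φ_{c-i}` only, and nontrivially, where
`c = -2μ - 2λ`. Invariance under `e_{c-2i}` evaluated at `(φ_i, φ_i)` and symmetry then force
`μ + i + λ(c - 2i + 1) = 0` for every `i`; the cases `i = 0, 1` give `λ = 1/2` and
`2μ = -c - 1 ∈ ℤ`. Conversely, for `λ = 1/2` the two terms of the invariance identity for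
`Bsym` carry the weights of `φ_i` and `φ_j`, which add up to `2μ + i + j + n + 1`, and this
vanishes on the support of `Bsym`.
-/

lemma wittE_phi (lam mu : ℂ) (n i : ℤ) :
    wittE lam mu n (phi i) = (mu + i + lam * (n + 1)) • phi (i + n) := by
  simp [wittE, phi]

lemma isWittInvariant_of_phi {lam mu : ℂ} {B : FF →ₗ[ℂ] FF →ₗ[ℂ] ℂ}
    (h : ∀ n i j, B (wittE lam mu n (phi i)) (phi j) + B (phi i) (wittE lam mu n (phi j)) = 0) :
    IsWittInvariant lam mu B := by
  intro n u v
  have hB : B.compl₁₂ (wittE lam mu n) LinearMap.id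
      + B.compl₁₂ LinearMap.id (wittE lam mu n) = 0 := by
    ext i j
    exact h n i j
  simpa using congr($hB u v)

section Forward

variable {lam mu : ℂ} {B : FF →ₗ[ℂ] FF →ₗ[ℂ] ℂ}

lemma IsWittInvariant.apply_phi (hB : IsWittInvariant lam mu B) (n i j : ℤ) :
    (mu + i + lam * (n + 1)) * B (phi (i + n)) (phi j)
      + (mu + j + lam * (n + 1)) * B (phi i) (phi (j + n)) = 0 := by
  simpa [wittE_phi] using hB n (phi i) (phi j)

lemma IsWittInvariant.add_eq_of_apply_phi_ne_zero (hB : IsWittInvariant lam mu B) {i j : ℤ}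
    (hij : B (phi i) (phi j) ≠ 0) : ((i + j : ℤ) : ℂ) = -2 * mu - 2 * lam := by
  have h0 := hB.apply_phi 0 i j
  simp only [Int.cast_zero, zero_add, mul_one, add_zero] at h0
  have h : (2 * mu + 2 * lam + i + j) * B (phi i) (phi j) = 0 := by linear_combination h0
  push_cast
  linear_combination (mul_eq_zero.1 h).resolve_right hij

lemma exists_apply_phi_ne_zero (hnd : ∀ u, (∀ v, B u v = 0) → u = 0) (i : ℤ) :
    ∃ j, B (phi i) (phi j) ≠ 0 := by
  by_contra! h
  have hi : B (phi i) = 0 := by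
    ext j
    exact h j
  exact Finsupp.single_ne_zero.2 one_ne_zero (hnd (phi i) fun v => by rw [hi, LinearMap.zero_apply])

theorem IsWittInvariant.eq_half_and_exists_two_mul_eq (hsym : ∀ u v, B u v = B v u)
    (hnd : ∀ u, (∀ v, B u v = 0) → u = 0) (hB : IsWittInvariant lam mu B) :
    lam = 1/2 ∧ ∃ k : ℤ, 2 * mu = k := by
  obtain ⟨c, hc⟩ := exists_apply_phi_ne_zero hnd 0
  have hc := hB.add_eq_of_apply_phi_ne_zero hc
  have hanti : ∀ i j, B (phi i) (phi j) ≠ 0 → i + j = c := fun i j hij => by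
    simpa using Int.cast_injective ((hB.add_eq_of_apply_phi_ne_zero hij).trans hc.symm)
  have hweight : ∀ i : ℤ, mu + i + lam * ((c - 2 * i : ℤ) + 1) = 0 := by
    intro i
    obtain ⟨j, hj⟩ := exists_apply_phi_ne_zero hnd i
    obtain rfl : j = c - i := by linarith [hanti i j hj]
    have h := hB.apply_phi (c - 2 * i) i i
    rw [show i + (c - 2 * i) = c - i by ring, hsym (phi (c - i))] at h
    exact (mul_eq_zero.1 (by linear_combination h / 2)).resolve_right hj
  have e0 := hweight 0
  have e1 := hweight 1
  push_cast at e0 e1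
  have hlam : lam = 1/2 := by linear_combination (e0 - e1) / 2
  refine ⟨hlam, -c - 1, ?_⟩
  push_cast
  linear_combination 2 * e0 - (2 * c + 2) * hlam

end Forward

lemma Bsym_phi (mu : ℂ) (i j : ℤ) :
    Bsym mu (phi i) (phi j) = if ((i + j : ℤ) : ℂ) = -2*mu - 1 then 1 else 0 := by
  simp only [Bsym, phi, Finsupp.lsum_single, LinearMap.toSpanSingleton_apply_one]
  split_ifs <;> simp

lemma Bsym_comm (mu : ℂ) (u v : FF) : Bsym mu u v = Bsym mu v u := by
  have h : (Bsym mu).flip = Bsym mu := by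
    ext i j
    show Bsym mu (phi j) (phi i) = Bsym mu (phi i) (phi j)
    rw [Bsym_phi, Bsym_phi, add_comm]
  exact congr($h v u)

lemma flip_Bsym_phi {mu : ℂ} {k : ℤ} (hk : 2 * mu = k) (j : ℤ) :
    (Bsym mu).flip (phi j) = Finsupp.lapply (-k - 1 - j) := by
  ext i
  show Bsym mu (phi i) (phi j) = phi i (-k - 1 - j)
  have hcast : (-2 * mu - 1 : ℂ) = ((-k - 1 : ℤ) : ℂ) := by push_cast; linear_combination -hk
  rw [Bsym_phi, phi, Finsupp.single_apply, hcast]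
  simp only [Int.cast_inj]
  split_ifs <;> first | rfl | (exfalso; omega)

lemma eq_zero_of_forall_Bsym_eq_zero {mu : ℂ} (hmu : ∃ k : ℤ, 2 * mu = k) (u : FF)
    (hu : ∀ v, Bsym mu u v = 0) : u = 0 := by
  obtain ⟨k, hk⟩ := hmu
  ext i
  have h := hu (phi (-k - 1 - i))
  rw [← LinearMap.flip_apply, flip_Bsym_phi hk] at h
  simpa using h

lemma isWittInvariant_Bsym (mu : ℂ) : IsWittInvariant (1/2) mu (Bsym mu) := by
  refine isWittInvariant_of_phi fun n i j => ?_
  simp only [wittE_phi, map_smul, LinearMap.smul_apply, smul_eq_mul, Bsym_phi,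
    show i + n + j = i + (j + n) by ring]
  split_ifs with h
  · push_cast at h
    linear_combination h
  · ring

/-- F_{λ,μ} admits a nondegenerate symmetric invariant bilinear form iff
λ = 1/2 and 2μ ∈ ℤ; and in that case the form B(φ_i,φ_j) = [i+j = −2μ−1] is
symmetric, nondegenerate and invariant. -/
theorem statement_2 (lam mu : ℂ) :
    ((∃ B : FF →ₗ[ℂ] FF →ₗ[ℂ] ℂ,
        (∀ u v, B u v = B v u) ∧
        (∀ u, (∀ v, B u v = 0) → u = 0) ∧
        IsWittInvariant lam mu B) ↔
      (lam = 1/2 ∧ ∃ k : ℤ, 2*mu = (k : ℂ))) ∧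
    ((lam = 1/2 ∧ ∃ k : ℤ, 2*mu = (k : ℂ)) →
      (∀ i j : ℤ, Bsym mu (phi i) (phi j)
          = if ((i + j : ℤ) : ℂ) = -2*mu - 1 then 1 else 0) ∧
      (∀ u v, Bsym mu u v = Bsym mu v u) ∧
      (∀ u, (∀ v, Bsym mu u v = 0) → u = 0) ∧
      IsWittInvariant lam mu (Bsym mu)) := by
  refine ⟨⟨fun ⟨B, hsym, hnd, hB⟩ => hB.eq_half_and_exists_two_mul_eq hsym hnd, ?_⟩, ?_⟩ <;>
    rintro ⟨rfl, hmu⟩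
  · exact ⟨Bsym mu, Bsym_comm mu, eq_zero_of_forall_Bsym_eq_zero hmu,
      isWittInvariant_Bsym mu⟩
  · exact ⟨Bsym_phi mu, Bsym_comm mu, eq_zero_of_forall_Bsym_eq_zero hmu,
      isWittInvariant_Bsym mu⟩
end
end

section
/- In the Witt-algebra module F_{0,0} of functions (action e_n·φ_i = i·φ_{i+n}), the line ℂφ_0 is a W-submodule on which W acts trivially, and on the quotient module dF := F_{0,0}/ℂφ_0 the bilinear form determined by B(φ̄_i, φ̄_j) = j if i + j = 0 and B(φ̄_i, φ̄_j) = 0 otherwise (for i, j ≠ 0, where φ̄_i denotes the class of φ_i) is a well-defined invariant, skew-symmetric, nondegenerate bilinear form. -/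
open scoped Classical

noncomputable section

/-- The line ℂφ₀ ⊆ F_{0,0}. -/
def lineSub : Submodule ℂ FF := Submodule.span ℂ {phi 0}

/-- The quotient module dF = F_{0,0}/ℂφ₀. -/
abbrev dF := FF ⧸ lineSub

/-!
The form is the residue pairing `(f, g) ↦ Res (f dg)` on `ℂ[t, t⁻¹]`. It is skew because
`f dg + g df = d(fg)` has no residue, and invariant because, with `e_n = t^{n+1} d/dt`,
`(e_n f) dg + f d(e_n g) = d(f t^{n+1} g')` is exact as well. Its radical is the line of
constants `ℂφ₀`, which `W` kills, so both the action and the form descend to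
`dF = F_{0,0}/ℂφ₀`, where the form is nondegenerate.
-/

theorem wittE_single (lam mu : ℂ) (n i : ℤ) (c : ℂ) :
    wittE lam mu n (Finsupp.single i c)
      = (mu + i + lam * (n + 1)) • Finsupp.single (i + n) c := by
  simp only [wittE, Finsupp.lsum_single, LinearMap.smul_apply, Finsupp.lsingle_apply]

theorem wittE_zero_zero_single (n i : ℤ) (c : ℂ) :
    wittE 0 0 n (Finsupp.single i c) = Finsupp.single (i + n) (i * c) := by
  rw [wittE_single, Finsupp.smul_single, smul_eq_mul]
  ring_nf

theorem lineSub_le_ker_wittE (n : ℤ) : lineSub ≤ LinearMap.ker (wittE 0 0 n) := by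
  rw [lineSub, Submodule.span_singleton_le_iff_mem, LinearMap.mem_ker, phi,
    wittE_zero_zero_single]
  simp

/-- The residue pairing: for `f = ∑ uᵢ tⁱ` and `g = ∑ vⱼ tʲ`,
`Res (f dg) = ∑ᵢ uᵢ · (-i) · v₋ᵢ`. -/
def residuePairing : FF →ₗ[ℂ] FF →ₗ[ℂ] ℂ :=
  Finsupp.lsum ℂ fun i => LinearMap.toSpanSingleton ℂ (FF →ₗ[ℂ] ℂ)
    ((-(i : ℂ)) • Finsupp.lapply (-i))

theorem residuePairing_single (i : ℤ) (c : ℂ) (v : FF) :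
    residuePairing (Finsupp.single i c) v = -(c * i * v (-i)) := by
  simp only [residuePairing, Finsupp.lsum_single, LinearMap.toSpanSingleton_apply,
    LinearMap.smul_apply, Finsupp.lapply_apply, smul_eq_mul]
  ring

theorem residuePairing_single_single (i j : ℤ) (c d : ℂ) :
    residuePairing (Finsupp.single i c) (Finsupp.single j d)
      = if i + j = 0 then c * d * j else 0 := by
  rw [residuePairing_single, Finsupp.single_apply]
  by_cases h : i + j = 0
  · have hj : (j : ℂ) = -i := by rw [eq_neg_of_add_eq_zero_right h, Int.cast_neg]
    rw [if_pos (by omega), if_pos h, hj]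
    ring
  · rw [if_neg (by omega), if_neg h, mul_zero, neg_zero]

theorem residuePairing_flip : residuePairing.flip = -residuePairing :=
  Finsupp.lhom_ext fun j d => Finsupp.lhom_ext fun i c => by
    simp only [LinearMap.flip_apply, LinearMap.neg_apply, residuePairing_single_single,
      add_comm j i]
    split_ifs with h
    · have hj : (j : ℂ) = -i := by rw [eq_neg_of_add_eq_zero_right h, Int.cast_neg]
      rw [hj]
      ring
    · rw [neg_zero]

theorem residuePairing_swap (u v : FF) : residuePairing u v = -residuePairing v u :=
  LinearMap.congr_fun₂ residuePairing_flip v u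

theorem isRefl_residuePairing : residuePairing.IsRefl := fun u v h => by
  rw [residuePairing_swap, h, neg_zero]

theorem isWittInvariant_residuePairing : IsWittInvariant 0 0 residuePairing := by
  intro n u v
  suffices residuePairing ∘ₗ wittE 0 0 n + residuePairing.compl₂ (wittE 0 0 n) = 0 from
    LinearMap.congr_fun₂ this u v
  refine Finsupp.lhom_ext fun i c => Finsupp.lhom_ext fun j d => ?_
  simp only [LinearMap.add_apply, LinearMap.comp_apply, LinearMap.compl₂_apply,
    LinearMap.zero_apply, wittE_zero_zero_single, residuePairing_single_single]
  by_cases h : i + n + j = 0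
  · have hjn : ((j + n : ℤ) : ℂ) = -i := by rw [show j + n = -i by omega, Int.cast_neg]
    rw [if_pos h, if_pos (by omega), hjn]
    ring
  · rw [if_neg h, if_neg (by omega), add_zero]

theorem residuePairing_phi_zero : residuePairing (phi 0) = 0 :=
  LinearMap.ext fun v => by simp [phi, residuePairing_single]

theorem lineSub_le_ker_residuePairing : lineSub ≤ LinearMap.ker residuePairing := by
  rw [lineSub, Submodule.span_singleton_le_iff_mem, LinearMap.mem_ker]
  exact residuePairing_phi_zero

theorem residuePairing_phi_right (u : FF) (j : ℤ) : residuePairing u (phi j) = j * u (-j) := by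
  rw [residuePairing_swap, phi, residuePairing_single]
  ring

theorem mem_lineSub_of_apply_eq_zero {u : FF} (hu : ∀ k ≠ 0, u k = 0) : u ∈ lineSub := by
  refine Submodule.mem_span_singleton.2 ⟨u 0, ?_⟩
  rw [phi, Finsupp.smul_single_one, eq_comm, Finsupp.eq_single_iff]
  refine ⟨fun k hk => ?_, rfl⟩
  by_contra hk0
  exact Finsupp.mem_support_iff.1 hk (hu k (by simpa using hk0))

def wittEQuot (n : ℤ) : Module.End ℂ dF :=
  lineSub.mapQ lineSub (wittE 0 0 n) ((lineSub_le_ker_wittE n).trans (LinearMap.ker_le_comap _))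

def residueForm : dF →ₗ[ℂ] dF →ₗ[ℂ] ℂ :=
  isRefl_residuePairing.liftQ₂ residuePairing lineSub lineSub_le_ker_residuePairing

theorem residueForm_mk (u v : FF) :
    residueForm (lineSub.mkQ u) (lineSub.mkQ v) = residuePairing u v :=
  rfl

theorem residueForm_swap (x y : dF) : residueForm x y = -residueForm y x := by
  obtain ⟨u, rfl⟩ := lineSub.mkQ_surjective x
  obtain ⟨v, rfl⟩ := lineSub.mkQ_surjective y
  exact residuePairing_swap u v

theorem residueForm_wittEQuot_add (n : ℤ) (x y : dF) :
    residueForm (wittEQuot n x) y + residueForm x (wittEQuot n y) = 0 := by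
  obtain ⟨u, rfl⟩ := lineSub.mkQ_surjective x
  obtain ⟨v, rfl⟩ := lineSub.mkQ_surjective y
  exact isWittInvariant_residuePairing n u v

theorem separatingLeft_residueForm : residueForm.SeparatingLeft := by
  intro x hx
  obtain ⟨u, rfl⟩ := lineSub.mkQ_surjective x
  refine (Submodule.Quotient.mk_eq_zero _).2 (mem_lineSub_of_apply_eq_zero fun k hk => ?_)
  have h := hx (lineSub.mkQ (phi (-k)))
  rw [residueForm_mk, residuePairing_phi_right, neg_neg] at h
  exact (mul_eq_zero.1 h).resolve_left (by simpa using hk)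

/-- in F_{0,0} (action e_n·φ_i = i·φ_{i+n}), the line ℂφ₀ is a
W-submodule on which W acts trivially, and on dF = F_{0,0}/ℂφ₀ the induced W-action
Enq exists and the bilinear form determined by B(φ̄_i, φ̄_j) = j·[i+j = 0]
(for i, j ≠ 0) is a well-defined invariant, skew-symmetric, nondegenerate
bilinear form. -/
theorem statement_4 :
    (∀ n : ℤ, ∀ u ∈ lineSub, wittE 0 0 n u = 0) ∧
    ∃ (Enq : ℤ → Module.End ℂ dF) (Bq : dF →ₗ[ℂ] dF →ₗ[ℂ] ℂ),
      (∀ (n : ℤ) (u : FF), Enq n (lineSub.mkQ u) = lineSub.mkQ (wittE 0 0 n u)) ∧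
      (∀ i j : ℤ, i ≠ 0 → j ≠ 0 →
        Bq (lineSub.mkQ (phi i)) (lineSub.mkQ (phi j))
          = if i + j = 0 then (j : ℂ) else 0) ∧
      (∀ u v, Bq u v = - Bq v u) ∧
      (∀ u, (∀ v, Bq u v = 0) → u = 0) ∧
      (∀ (n : ℤ) (u v : dF), Bq (Enq n u) v + Bq u (Enq n v) = 0) := by
  refine ⟨fun n => lineSub_le_ker_wittE n, wittEQuot, residueForm, fun _ _ => rfl,
    fun i j _ _ => ?_, residueForm_swap, separatingLeft_residueForm, residueForm_wittEQuot_add⟩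
  rw [residueForm_mk, phi, phi, residuePairing_single_single, mul_one, one_mul]

end
end

section
/- Let L be a simple Lie algebra over a field K, and let Γ, Γ' be Lie subalgebras of L such that: ⁅x, y⁆ = 0 for all x ∈ Γ, y ∈ Γ'; Γ ∩ Γ' = 0; Γ ≠ 0; Γ has trivial center (if x ∈ Γ satisfies ⁅x, z⁆ = 0 for all z ∈ Γ, then x = 0); and Γ + Γ' is a maximal proper Lie subalgebra of L (i.e., Γ + Γ' ≠ L and every Lie subalgebra of L strictly containing Γ + Γ' equals L). Then the centralizer of Γ in L, namely {z ∈ L : ⁅z, x⁆ = 0 for all x ∈ Γ}, equals Γ'. In particular (Γ, Γ') is a dual pair. -/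
/-- if L is a simple Lie algebra, Γ, Γ' are commuting subalgebras with
Γ ∩ Γ' = 0, Γ ≠ 0, Γ has trivial center, and Γ + Γ' is a maximal proper Lie
subalgebra of L, then the centralizer of Γ in L equals Γ' (so (Γ, Γ') is a dual pair). -/
theorem statement_5 (K : Type*) [Field K] (L : Type*) [LieRing L] [LieAlgebra K L]
    (hsimple : LieAlgebra.IsSimple K L)
    (Γ Γ' : LieSubalgebra K L)
    (hcomm : ∀ x ∈ Γ, ∀ y ∈ Γ', ⁅x, y⁆ = 0)
    (hdisj : Γ ⊓ Γ' = ⊥)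
    (hne : Γ ≠ ⊥)
    (hcenter : ∀ x ∈ Γ, (∀ z ∈ Γ, ⁅x, z⁆ = 0) → x = 0)
    (hproper : {z : L | ∃ x ∈ Γ, ∃ y ∈ Γ', z = x + y} ≠ Set.univ)
    (hmax : ∀ M : LieSubalgebra K L,
      {z : L | ∃ x ∈ Γ, ∃ y ∈ Γ', z = x + y} ⊂ (M : Set L) → M = ⊤) :
    {z : L | ∀ x ∈ Γ, ⁅z, x⁆ = 0} = (Γ' : Set L) := by
  -- The centralizer of Γ as a Lie subalgebra
  set Cset : Set L := {z : L | ∀ x ∈ Γ, ⁅z, x⁆ = 0} with hCset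
  let C : LieSubalgebra K L :=
    { carrier := Cset
      add_mem' := by
        intro a b ha hb x hx
        rw [add_lie, ha x hx, hb x hx, add_zero]
      zero_mem' := by intro x hx; simp
      smul_mem' := by
        intro t a ha x hx
        rw [smul_lie, ha x hx, smul_zero]
      lie_mem' := by
        intro a b ha hb x hx
        rw [lie_lie, ha x hx, hb x hx, lie_zero, lie_zero, sub_zero] }
  have hCmem : ∀ z : L, z ∈ C ↔ ∀ x ∈ Γ, ⁅z, x⁆ = 0 := fun z => Iff.rfl
  -- Γ' ⊆ C
  have hΓ'C : ∀ y ∈ Γ', y ∈ C := by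
    intro y hy x hx
    have := hcomm x hx y hy
    rw [← lie_skew, this, neg_zero]
  -- [Γ, C] ⊆ C
  have hbr : ∀ g ∈ Γ, ∀ c ∈ C, ⁅g, c⁆ ∈ C := by
    intro g hg c hc x hx
    rw [lie_lie, hc x hx, hc _ (Γ.lie_mem hg hx), lie_zero, sub_zero]
  -- suppose the conclusion fails
  by_contra hne'
  have hss : (Γ' : Set L) ⊆ Cset := fun y hy => hΓ'C y hy
  obtain ⟨c, hcC, hcΓ'⟩ : ∃ c, c ∈ C ∧ c ∉ Γ' := by
    by_contra h
    push_neg at h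
    exact hne' (Set.Subset.antisymm (fun z hz => h z hz) hss)
  -- M = Γ + C as a Lie subalgebra
  let M : LieSubalgebra K L :=
    { Γ.toSubmodule ⊔ C.toSubmodule with
      lie_mem' := by
        intro a b ha hb
        obtain ⟨g1, hg1, c1, hc1, rfl⟩ :=
          Submodule.mem_sup.mp (show a ∈ Γ.toSubmodule ⊔ C.toSubmodule from ha)
        obtain ⟨g2, hg2, c2, hc2, rfl⟩ :=
          Submodule.mem_sup.mp (show b ∈ Γ.toSubmodule ⊔ C.toSubmodule from hb)
        show _ ∈ Γ.toSubmodule ⊔ C.toSubmodule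
        rw [Submodule.mem_sup]
        rw [add_lie, lie_add, lie_add]
        refine ⟨⁅g1, g2⁆, Γ.lie_mem hg1 hg2,
          ⁅g1, c2⁆ + (⁅c1, g2⁆ + ⁅c1, c2⁆), ?_, by abel⟩
        refine C.add_mem (hbr g1 hg1 c2 hc2) (C.add_mem ?_ (C.lie_mem hc1 hc2))
        rw [← neg_neg (⁅c1, g2⁆ : L), lie_skew]
        exact C.neg_mem (hbr g2 hg2 c1 hc1) }
  have hMmem : ∀ z : L, z ∈ M ↔ z ∈ Γ.toSubmodule ⊔ C.toSubmodule := fun z => Iff.rfl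
  -- Γ + Γ' ⊊ M
  have hsub : {z : L | ∃ x ∈ Γ, ∃ y ∈ Γ', z = x + y} ⊂ (M : Set L) := by
    constructor
    · rintro z ⟨x, hx, y, hy, rfl⟩
      exact Submodule.add_mem_sup hx (hΓ'C y hy)
    · intro hMsub
      have hcM : c ∈ (M : Set L) := by
        show c ∈ Γ.toSubmodule ⊔ C.toSubmodule
        exact Submodule.mem_sup_right hcC
      have := hMsub hcM
      obtain ⟨x, hx, y, hy, hxy⟩ := this
      -- then x = c - y ∈ C, x ∈ Γ, so x = 0 by hcenter, so c = y ∈ Γ'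
      have hxC : x ∈ C := by
        have : x = c + (-y) := by rw [hxy]; abel
        rw [this]
        exact C.add_mem hcC (C.neg_mem (hΓ'C y hy))
      have hx0 : x = 0 := hcenter x hx (fun z hz => hxC z hz)
      apply hcΓ'
      rw [hx0, zero_add] at hxy
      rwa [hxy]
  have hMtop := hmax M hsub
  -- C is an ideal
  let I : LieIdeal K L :=
    { C.toSubmodule with
      lie_mem := by
        intro z m hm
        have hz : z ∈ M := by rw [hMtop]; trivial
        rw [hMmem, Submodule.mem_sup] at hz
        obtain ⟨g, hg, c', hc', rfl⟩ := hz
        rw [add_lie]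
        exact C.add_mem (hbr g hg m hm) (C.lie_mem hc' hm) }
  have hImem : ∀ z : L, z ∈ I ↔ z ∈ C := fun z => Iff.rfl
  rcases hsimple.eq_bot_or_eq_top I with hbot | htop
  · -- C = ⊥ contradicts c ∈ C \ Γ'
    have : c = 0 := by
      have hcI : c ∈ I := hcC
      rwa [hbot, LieSubmodule.mem_bot] at hcI
    exact hcΓ' (this ▸ Γ'.zero_mem)
  · -- C = ⊤ : every element of Γ is central in Γ, so Γ = ⊥
    apply hne
    rw [LieSubalgebra.eq_bot_iff]
    intro x hx
    refine hcenter x hx (fun z hz => ?_)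
    have hxC : x ∈ C := by
      have : x ∈ I := by rw [htop]; trivial
      exact this
    exact hxC z hz
end

section
/- Let n ≥ 1 and S = J_{2n} ⊗ J_2. Inside the orthogonal Lie algebra so(S), the subalgebras Γ = {A ⊗ I_2 : A ∈ sp(2n,ℂ)} and Γ' = {I_{2n} ⊗ B : B ∈ sp(2,ℂ)} are mutual centralizers: {X ∈ so(S) : [X, A ⊗ I_2] = 0 for all A ∈ sp(2n,ℂ)} = Γ', and {X ∈ so(S) : [X, I_{2n} ⊗ B] = 0 for all B ∈ sp(2,ℂ)} = Γ. Hence (sp(2n,ℂ), sp(2,ℂ)) is a Howe dual pair in so(4n,ℂ). -/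
/-!
Write `X` as a `2 × 2` array of `2n × 2n` blocks `X_ab` (resp. as a `2n × 2n` array of `2 × 2`
blocks). Then `X` commutes with every `A ⊗ I₂` iff every `X_ab` commutes with every `A`, and with
every `I ⊗ B` iff every `2 × 2` block commutes with every `B`. The commutants of `sp(2n)` and of
`sp(2)` are the scalars, so `X = I ⊗ C` (resp. `X = D ⊗ I`). For such `X` the defining equation of
`so(S)` reads `J ⊗ (Cᵀ J₂ + J₂ C) = 0` (resp. `(Dᵀ J + J D) ⊗ J₂ = 0`), and since `J ≠ 0` and
`J₂ ≠ 0` this says exactly `C ∈ sp(2)` (resp. `D ∈ sp(2n)`).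
-/

open Matrix
open Kronecker

noncomputable section

/-- J_{2n} = [[0, I_n], [−I_n, 0]] (rows/columns indexed by Fin n ⊕ Fin n). -/
def Jmat (n : ℕ) : Matrix (Fin n ⊕ Fin n) (Fin n ⊕ Fin n) ℂ :=
  Matrix.fromBlocks 0 1 (-1) 0

/-- J_2 = [[0,1],[−1,0]]. -/
def J2 : Matrix (Fin 2) (Fin 2) ℂ := !![0, 1; -1, 0]

/-- sp(2n,ℂ) = {A : Aᵀ J_{2n} + J_{2n} A = 0}. -/
def spSet (n : ℕ) : Set (Matrix (Fin n ⊕ Fin n) (Fin n ⊕ Fin n) ℂ) :=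
  {A | Aᵀ * Jmat n + Jmat n * A = 0}

/-- sp(2,ℂ) = {B : Bᵀ J_2 + J_2 B = 0}. -/
def sp2Set : Set (Matrix (Fin 2) (Fin 2) ℂ) :=
  {B | Bᵀ * J2 + J2 * B = 0}

/-- S = J_{2n} ⊗ J_2, a symmetric nondegenerate bilinear form on ℂ^{4n}. -/
def Smat (n : ℕ) :
    Matrix ((Fin n ⊕ Fin n) × Fin 2) ((Fin n ⊕ Fin n) × Fin 2) ℂ :=
  Jmat n ⊗ₖ J2

/-- so(S) = {X : Xᵀ S + S X = 0}. -/
def soSSet (n : ℕ) :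
    Set (Matrix ((Fin n ⊕ Fin n) × Fin 2) ((Fin n ⊕ Fin n) × Fin 2) ℂ) :=
  {X | Xᵀ * Smat n + Smat n * X = 0}

/-- φ(A,B) = A ⊗ I_2 + I_{2n} ⊗ B. -/
def phiMap (n : ℕ) (A : Matrix (Fin n ⊕ Fin n) (Fin n ⊕ Fin n) ℂ)
    (B : Matrix (Fin 2) (Fin 2) ℂ) :
    Matrix ((Fin n ⊕ Fin n) × Fin 2) ((Fin n ⊕ Fin n) × Fin 2) ℂ :=
  A ⊗ₖ (1 : Matrix (Fin 2) (Fin 2) ℂ) +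
    (1 : Matrix (Fin n ⊕ Fin n) (Fin n ⊕ Fin n) ℂ) ⊗ₖ B

namespace Matrix

theorem kronecker_eq_zero_iff {α l m n p : Type*} [MulZeroClass α] [NoZeroDivisors α]
    {A : Matrix l m α} {B : Matrix n p α} : A ⊗ₖ B = 0 ↔ A = 0 ∨ B = 0 := by
  refine ⟨fun h => ?_, by rintro (rfl | rfl) <;> simp⟩
  by_contra! hAB
  obtain ⟨i, j, hA⟩ : ∃ i j, A i j ≠ 0 := by simpa [← Matrix.ext_iff] using hAB.1
  obtain ⟨a, b, hB⟩ : ∃ a b, B a b ≠ 0 := by simpa [← Matrix.ext_iff] using hAB.2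
  exact mul_ne_zero hA hB (by simpa using congr_fun₂ h (i, a) (j, b))

theorem eq_zero_of_eq_neg {α ι κ : Type*} [NonAssocRing α] [NoZeroDivisors α] [CharZero α]
    {M : Matrix ι κ α} (h : M = -M) : M = 0 :=
  Matrix.ext fun i j => CharZero.eq_neg_self_iff.1 (congr_fun₂ h i j)

section Kronecker

variable {R m p : Type*} [CommRing R] [Fintype m] [Fintype p]

theorem transpose_one_kronecker_mul_add [DecidableEq m] (J : Matrix m m R) (K C : Matrix p p R) :
    ((1 : Matrix m m R) ⊗ₖ C)ᵀ * (J ⊗ₖ K) + J ⊗ₖ K * ((1 : Matrix m m R) ⊗ₖ C)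
      = J ⊗ₖ (Cᵀ * K + K * C) := by
  rw [← kroneckerMap_transpose, transpose_one, ← mul_kronecker_mul, ← mul_kronecker_mul,
    one_mul, mul_one, ← kronecker_add]

theorem transpose_kronecker_one_mul_add [DecidableEq p] (A J : Matrix m m R) (K : Matrix p p R) :
    (A ⊗ₖ (1 : Matrix p p R))ᵀ * (J ⊗ₖ K) + J ⊗ₖ K * (A ⊗ₖ (1 : Matrix p p R))
      = (Aᵀ * J + J * A) ⊗ₖ K := by
  rw [← kroneckerMap_transpose, transpose_one, ← mul_kronecker_mul, ← mul_kronecker_mul,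
    one_mul, mul_one, ← add_kronecker]

theorem commute_kronecker_one_one_kronecker [DecidableEq m] [DecidableEq p] (A : Matrix m m R)
    (B : Matrix p p R) : Commute (A ⊗ₖ (1 : Matrix p p R)) ((1 : Matrix m m R) ⊗ₖ B) := by
  simp only [Commute, SemiconjBy, ← mul_kronecker_mul, mul_one, one_mul]

theorem commute_kronecker_one_iff [DecidableEq p] {X : Matrix (m × p) (m × p) R}
    {A : Matrix m m R} :
    Commute X (A ⊗ₖ (1 : Matrix p p R)) ↔ ∀ a b, Commute (of fun i j => X (i, a) (j, b)) A := by
  simp only [Commute, SemiconjBy, ← Matrix.ext_iff, Prod.forall, mul_apply, of_apply,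
    kronecker_apply, one_apply, Fintype.sum_prod_type, mul_ite, ite_mul, mul_one, mul_zero,
    zero_mul, Finset.sum_ite_eq, Finset.sum_ite_eq', Finset.mem_univ, if_true]
  exact ⟨fun h a b i j => h i a j b, fun h i a j b => h a b i j⟩

theorem commute_one_kronecker_iff [DecidableEq m] {X : Matrix (m × p) (m × p) R}
    {B : Matrix p p R} :
    Commute X ((1 : Matrix m m R) ⊗ₖ B) ↔ ∀ i j, Commute (of fun a b => X (i, a) (j, b)) B := by
  simp only [Commute, SemiconjBy, ← Matrix.ext_iff, Prod.forall, mul_apply, of_apply,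
    kronecker_apply, one_apply, Fintype.sum_prod_type, mul_ite, ite_mul, one_mul, mul_zero,
    zero_mul, Finset.sum_ite_irrel, Finset.sum_const_zero, Finset.sum_ite_eq, Finset.sum_ite_eq',
    Finset.mem_univ, if_true]
  exact ⟨fun h i j a b => h i a j b, fun h i a j b => h i j a b⟩

theorem exists_eq_one_kronecker_of_commute [DecidableEq m] [DecidableEq p]
    {𝒮 : Set (Matrix m m R)} (h𝒮 : 𝒮.centralizer ⊆ Set.range (scalar m))
    {X : Matrix (m × p) (m × p) R} (hX : ∀ A ∈ 𝒮, Commute X (A ⊗ₖ (1 : Matrix p p R))) :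
    ∃ C : Matrix p p R, X = (1 : Matrix m m R) ⊗ₖ C := by
  have hblock (a b : p) : ∃ c, scalar m c = of fun i j => X (i, a) (j, b) :=
    h𝒮 fun A hA => (commute_kronecker_one_iff.1 (hX A hA) a b).symm.eq
  choose c hc using hblock
  refine ⟨of c, Matrix.ext fun ⟨i, a⟩ ⟨j, b⟩ => ?_⟩
  simpa [one_apply, diagonal_apply, mul_comm] using (congr_fun₂ (hc a b) i j).symm

theorem exists_eq_kronecker_one_of_commute [DecidableEq m] [DecidableEq p]
    {𝒯 : Set (Matrix p p R)} (h𝒯 : 𝒯.centralizer ⊆ Set.range (scalar p))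
    {X : Matrix (m × p) (m × p) R} (hX : ∀ B ∈ 𝒯, Commute X ((1 : Matrix m m R) ⊗ₖ B)) :
    ∃ D : Matrix m m R, X = D ⊗ₖ (1 : Matrix p p R) := by
  have hblock (i j : m) : ∃ c, scalar p c = of fun a b => X (i, a) (j, b) :=
    h𝒯 fun B hB => (commute_one_kronecker_iff.1 (hX B hB) i j).symm.eq
  choose c hc using hblock
  refine ⟨of c, Matrix.ext fun ⟨i, a⟩ ⟨j, b⟩ => ?_⟩
  simpa [one_apply, diagonal_apply] using (congr_fun₂ (hc i j) a b).symm

end Kronecker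

end Matrix

theorem fromBlocks_neg_transpose_mem_spSet {n : ℕ} (a : Matrix (Fin n) (Fin n) ℂ) :
    fromBlocks a 0 0 (-aᵀ) ∈ spSet n := by
  simp [spSet, Jmat, fromBlocks_transpose, fromBlocks_multiply, fromBlocks_add]

theorem fromBlocks_zero_one_zero_zero_mem_spSet (n : ℕ) :
    fromBlocks 0 (1 : Matrix (Fin n) (Fin n) ℂ) 0 0 ∈ spSet n := by
  simp [spSet, Jmat, fromBlocks_transpose, fromBlocks_multiply, fromBlocks_add]

theorem centralizer_spSet_subset (n : ℕ) :
    (spSet n).centralizer ⊆ Set.range (scalar (Fin n ⊕ Fin n)) := by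
  intro P hP
  obtain ⟨p, q, r, s, rfl⟩ : ∃ p q r s, P = fromBlocks p q r s :=
    ⟨_, _, _, _, (fromBlocks_toBlocks P).symm⟩
  have hdiag (a : Matrix (Fin n) (Fin n) ℂ) :
      a * p = p * a ∧ a * q = -(q * aᵀ) ∧ -(aᵀ * r) = r * a ∧ aᵀ * s = s * aᵀ := by
    simpa [fromBlocks_multiply] using hP _ (fromBlocks_neg_transpose_mem_spSet a)
  have hq : q = 0 := eq_zero_of_eq_neg (by simpa using (hdiag 1).2.1)
  have hr : r = 0 := eq_zero_of_eq_neg (by simpa [eq_comm] using (hdiag 1).2.2.1)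
  obtain ⟨c, rfl⟩ : p ∈ Set.range (scalar (Fin n)) :=
    mem_range_scalar_iff_commute_single'.2 fun i j => (hdiag _).1
  obtain ⟨d, rfl⟩ : s ∈ Set.range (scalar (Fin n)) :=
    mem_range_scalar_iff_commute_single'.2 fun i j => (hdiag (single i j 1)ᵀ).2.2.2
  subst hq hr
  have hcd : scalar (Fin n) d = scalar (Fin n) c := by
    have := hP _ (fromBlocks_zero_one_zero_zero_mem_spSet n)
    rw [fromBlocks_multiply, fromBlocks_multiply, fromBlocks_inj] at this
    simpa using this.2.1
  exact ⟨c, by simp [hcd]⟩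

theorem single_mem_sp2Set {i j : Fin 2} (hij : i ≠ j) : single i j (1 : ℂ) ∈ sp2Set := by
  simp only [sp2Set, Set.mem_ofPred_eq]
  ext a b
  fin_cases i <;> fin_cases j <;> fin_cases a <;> fin_cases b <;>
    simp_all [J2, mul_apply, single_apply, vecMul, dotProduct]

theorem centralizer_sp2Set_subset : sp2Set.centralizer ⊆ Set.range (scalar (Fin 2)) :=
  fun _ hP => mem_range_scalar_of_commute_single fun _ _ hij => hP _ (single_mem_sp2Set hij)

theorem Jmat_ne_zero {n : ℕ} (hn : 1 ≤ n) : Jmat n ≠ 0 := fun h => by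
  simpa [Jmat] using congr_fun₂ h (Sum.inl ⟨0, hn⟩) (Sum.inr ⟨0, hn⟩)

theorem J2_ne_zero : J2 ≠ 0 := fun h => by
  simpa [J2] using congr_fun₂ h 0 1

theorem one_kronecker_mem_soSSet_iff {n : ℕ} (hn : 1 ≤ n) {B : Matrix (Fin 2) (Fin 2) ℂ} :
    (1 : Matrix (Fin n ⊕ Fin n) (Fin n ⊕ Fin n) ℂ) ⊗ₖ B ∈ soSSet n ↔ B ∈ sp2Set := by
  simp only [soSSet, sp2Set, Smat, Set.mem_ofPred_eq, transpose_one_kronecker_mul_add,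
    kronecker_eq_zero_iff, Jmat_ne_zero hn, false_or]

theorem kronecker_one_mem_soSSet_iff {n : ℕ} {A : Matrix (Fin n ⊕ Fin n) (Fin n ⊕ Fin n) ℂ} :
    A ⊗ₖ (1 : Matrix (Fin 2) (Fin 2) ℂ) ∈ soSSet n ↔ A ∈ spSet n := by
  simp only [soSSet, spSet, Smat, Set.mem_ofPred_eq, transpose_kronecker_one_mul_add,
    kronecker_eq_zero_iff, J2_ne_zero, or_false]

/-- inside so(S), S = J_{2n} ⊗ J_2, the subalgebras
Γ = {A ⊗ I₂ : A ∈ sp(2n,ℂ)} and Γ' = {I_{2n} ⊗ B : B ∈ sp(2,ℂ)} are mutual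
centralizers: (sp(2n,ℂ), sp(2,ℂ)) is a Howe dual pair in so(4n,ℂ). -/
theorem statement_7 (n : ℕ) (hn : 1 ≤ n) :
    {X ∈ soSSet n | ∀ A ∈ spSet n,
        ⁅X, A ⊗ₖ (1 : Matrix (Fin 2) (Fin 2) ℂ)⁆ = 0}
      = {X | ∃ B ∈ sp2Set,
          X = (1 : Matrix (Fin n ⊕ Fin n) (Fin n ⊕ Fin n) ℂ) ⊗ₖ B} ∧
    {X ∈ soSSet n | ∀ B ∈ sp2Set,
        ⁅X, (1 : Matrix (Fin n ⊕ Fin n) (Fin n ⊕ Fin n) ℂ) ⊗ₖ B⁆ = 0}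
      = {X | ∃ A ∈ spSet n, X = A ⊗ₖ (1 : Matrix (Fin 2) (Fin 2) ℂ)} := by
  refine ⟨Set.ext fun X => ?_, Set.ext fun X => ?_⟩ <;>
    simp only [Set.mem_ofPred_eq, ← commute_iff_lie_eq]
  · constructor
    · rintro ⟨hX, hcomm⟩
      obtain ⟨B, rfl⟩ := exists_eq_one_kronecker_of_commute (centralizer_spSet_subset n) hcomm
      exact ⟨B, (one_kronecker_mem_soSSet_iff hn).1 hX, rfl⟩
    · rintro ⟨B, hB, rfl⟩
      exact ⟨(one_kronecker_mem_soSSet_iff hn).2 hB,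
        fun A _ => (commute_kronecker_one_one_kronecker A B).symm⟩
  · constructor
    · rintro ⟨hX, hcomm⟩
      obtain ⟨A, rfl⟩ := exists_eq_kronecker_one_of_commute centralizer_sp2Set_subset hcomm
      exact ⟨A, kronecker_one_mem_soSSet_iff.1 hX, rfl⟩
    · rintro ⟨A, hA, rfl⟩
      exact ⟨kronecker_one_mem_soSSet_iff.2 hA,
        fun B _ => commute_kronecker_one_one_kronecker A B⟩

end
end
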